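/- arXiv:2006.06231 — 2 statements merged into one kernel-verified Lean document; each statement's English description precedes it below -/
import Mathlib

section
/- Let x_1,…,x_n be vectors in a real inner product space, Λ > 0, λ ∈ [0,1], x̄ = (1/n) Σ_{j=1}^n x_j the sample mean, and x̃_i = λ x_i + (1−λ) x̄ the mixup sample. Let R̂_B(H_ℓ) = 2^{-n} Σ_{σ∈{-1,1}^n} sup_{‖w‖≤Λ} (1/n) Σ_i σ_i ⟨w, x_i⟩ and R̂*_B(H_ℓ) = 2^{-n} Σ_{σ∈{-1,1}^n} sup_{‖w‖≤Λ} (1/n) Σ_i σ_i ⟨w, x̃_i⟩ be the empirical Rademacher complexities of the linear class on the original and mixup samples. Then R̂_B(H_ℓ) − R̂*_B(H_ℓ) ≤ (Λ (1−λ) / √n) · √( (1/n) Σ_{i=1}^n ‖x_i‖² − ‖x̄‖² ), where the quantity under the square root is the sample variance s²(‖x‖₂) = (1/n) Σ_i ‖x_i‖² − ‖x̄‖², which is nonnegative. -/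
open scoped RealInnerProductSpace

/-- The ±1 value associated to a Rademacher sign encoded as a Boolean. -/
noncomputable def sgn (b : Bool) : ℝ := if b then 1 else -1

lemma sgn_mul_self (b : Bool) : sgn b * sgn b = 1 := by cases b <;> simp [sgn]

section
variable {E : Type*} [NormedAddCommGroup E] [InnerProductSpace ℝ E]

lemma var_id (n : ℕ) (x : Fin n → E) (xbar : E) (hs : ∑ j, x j = (n : ℝ) • xbar) :
    ∑ i, ‖x i - xbar‖ ^ 2 = ∑ i, ‖x i‖ ^ 2 - n * ‖xbar‖ ^ 2 := by
  have h1 : ∀ i, ‖x i - xbar‖ ^ 2 = ‖x i‖ ^ 2 - 2 * ⟪x i, xbar⟫ + ‖xbar‖ ^ 2 := fun i =>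
    norm_sub_sq_real _ _
  have h2 : ∑ i, ⟪x i, xbar⟫ = (n : ℝ) * ‖xbar‖ ^ 2 := by
    rw [← sum_inner, hs, real_inner_smul_left, real_inner_self_eq_norm_sq]
  simp only [h1]
  rw [Finset.sum_add_distrib, Finset.sum_sub_distrib, ← Finset.mul_sum, h2]
  simp [Finset.card_univ]
  ring

lemma Zsq (n : ℕ) (y : Fin n → E) :
    ∑ σ : Fin n → Bool, ‖∑ i, sgn (σ i) • y i‖ ^ 2 = 2 ^ n * ∑ i, ‖y i‖ ^ 2 := by
  have h1 : ∀ σ : Fin n → Bool, ‖∑ i, sgn (σ i) • y i‖ ^ 2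
      = ∑ i, ∑ j, sgn (σ i) * sgn (σ j) * ⟪y i, y j⟫ := by
    intro σ
    rw [← real_inner_self_eq_norm_sq, sum_inner]
    refine Finset.sum_congr rfl fun i _ => ?_
    rw [real_inner_smul_left, inner_sum, Finset.mul_sum]
    refine Finset.sum_congr rfl fun j _ => ?_
    rw [real_inner_smul_right]; ring
  have orth : ∀ i j : Fin n, ∑ σ : Fin n → Bool, sgn (σ i) * sgn (σ j)
      = if i = j then (2 ^ n : ℝ) else 0 := by
    intro i j
    split_ifs with h
    · subst h; simp [sgn_mul_self, Finset.card_univ]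
    · refine Finset.sum_involution (fun σ _ => Function.update σ i (!(σ i))) ?_ ?_ (by simp) ?_
      · intro σ _
        simp only [Function.update_self, Function.update_of_ne (Ne.symm h),
          show ∀ b, sgn (!b) = -sgn b by intro b; cases b <;> simp [sgn]]
        ring
      · intro σ _ _ hcontra
        have := congrFun hcontra i
        simp [Function.update_self] at this
      · intro σ _
        funext k
        by_cases hk : k = i
        · subst hk; simp [Function.update_self]
        · simp [Function.update_of_ne hk]
  simp only [h1]
  rw [Finset.sum_comm]
  have : ∀ i : Fin n, ∑ σ : Fin n → Bool, ∑ j, sgn (σ i) * sgn (σ j) * ⟪y i, y j⟫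
      = 2 ^ n * ‖y i‖ ^ 2 := by
    intro i
    rw [Finset.sum_comm]
    have : ∀ j : Fin n, ∑ σ : Fin n → Bool, sgn (σ i) * sgn (σ j) * ⟪y i, y j⟫
        = (if i = j then (2 ^ n : ℝ) else 0) * ⟪y i, y j⟫ := by
      intro j; rw [← Finset.sum_mul, orth]
    simp only [this, ite_mul, zero_mul]
    rw [Finset.sum_ite_eq Finset.univ i fun j => (2 ^ n : ℝ) * ⟪y i, y j⟫]
    simp [real_inner_self_eq_norm_sq]
  simp only [this]
  rw [← Finset.mul_sum]

end


/-- Complexity reduction of linear classifiers with mixup: the difference between the empirical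
Rademacher complexity of the class `H_ℓ = {x ↦ ⟪w,x⟫ : ‖w‖ ≤ Λ}` on the original sample and on
the mixup sample `x̃ᵢ = λ xᵢ + (1-λ) x̄` is at most
`(Λ(1-λ)/√n) √((1/n)∑ᵢ‖xᵢ‖² - ‖x̄‖²)`, where the quantity under the square root is the
(nonnegative) sample variance of the norms. -/
theorem rademacher_reduction_linear_mixup {E : Type*} [NormedAddCommGroup E]
    [InnerProductSpace ℝ E] (n : ℕ) (hn : 0 < n) (x : Fin n → E) (Λ : ℝ) (hΛ : 0 < Λ)
    (l : ℝ) (hl : l ∈ Set.Icc (0 : ℝ) 1)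
    (xbar : E) (hxbar : xbar = (1 / n : ℝ) • ∑ j, x j)
    (xmix : Fin n → E) (hxmix : ∀ i, xmix i = l • x i + (1 - l) • xbar) :
    0 ≤ (1 / n : ℝ) * ∑ i, ‖x i‖ ^ 2 - ‖xbar‖ ^ 2
    ∧ ((2 ^ n : ℝ)⁻¹ * ∑ σ : Fin n → Bool,
          ⨆ w : {w : E // ‖w‖ ≤ Λ}, (1 / n : ℝ) * ∑ i, sgn (σ i) * ⟪w.1, x i⟫)
        - ((2 ^ n : ℝ)⁻¹ * ∑ σ : Fin n → Bool,
          ⨆ w : {w : E // ‖w‖ ≤ Λ}, (1 / n : ℝ) * ∑ i, sgn (σ i) * ⟪w.1, xmix i⟫)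
      ≤ (Λ * (1 - l) / Real.sqrt n)
          * Real.sqrt ((1 / n : ℝ) * ∑ i, ‖x i‖ ^ 2 - ‖xbar‖ ^ 2) := by

  have hN : (0 : ℝ) < n := by exact_mod_cast hn
  have hNne : (n : ℝ) ≠ 0 := ne_of_gt hN
  set y : Fin n → E := fun i => x i - xbar with hy
  have hs : ∑ j, x j = (n : ℝ) • xbar := by
    rw [hxbar, smul_smul]; field_simp; simp
  -- variance identity
  have hvar : ∑ i, ‖y i‖ ^ 2 = ∑ i, ‖x i‖ ^ 2 - n * ‖xbar‖ ^ 2 := by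
    exact var_id n x xbar hs
  set V : ℝ := (1 / n : ℝ) * ∑ i, ‖x i‖ ^ 2 - ‖xbar‖ ^ 2 with hV
  have hVeq : V = (1 / n : ℝ) * ∑ i, ‖y i‖ ^ 2 := by
    rw [hV, hvar, mul_sub]
    congr 1
    field_simp
  have hVnn : 0 ≤ V := by
    rw [hVeq]
    positivity
  refine ⟨hVnn, ?_⟩
  set Z : (Fin n → Bool) → E := fun σ => ∑ i, sgn (σ i) • y i with hZ
  have hl0 : 0 ≤ 1 - l := by linarith [hl.2]
  -- boundedness helper
  have key : ∀ (v : Fin n → E) (σ : Fin n → Bool) (w : E), ‖w‖ ≤ Λ →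
      ∑ i, sgn (σ i) * ⟪w, v i⟫ ≤ Λ * ‖∑ i, sgn (σ i) • v i‖ := by
    intro v σ w hw
    have h1 : ∑ i, sgn (σ i) * ⟪w, v i⟫ = ⟪w, ∑ i, sgn (σ i) • v i⟫ := by
      rw [inner_sum]
      exact Finset.sum_congr rfl fun i _ => (real_inner_smul_right _ _ _).symm
    rw [h1]
    calc ⟪w, ∑ i, sgn (σ i) • v i⟫ ≤ ‖w‖ * ‖∑ i, sgn (σ i) • v i‖ := real_inner_le_norm _ _
      _ ≤ Λ * ‖∑ i, sgn (σ i) • v i‖ := by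
        exact mul_le_mul_of_nonneg_right hw (norm_nonneg _)
  have bdd : ∀ (v : Fin n → E) (σ : Fin n → Bool),
      BddAbove (Set.range fun w : {w : E // ‖w‖ ≤ Λ} =>
        (1 / n : ℝ) * ∑ i, sgn (σ i) * ⟪w.1, v i⟫) := by
    intro v σ
    refine ⟨(1 / n : ℝ) * (Λ * ‖∑ i, sgn (σ i) • v i‖), ?_⟩
    rintro r ⟨w, rfl⟩
    exact mul_le_mul_of_nonneg_left (key v σ w.1 w.2) (by positivity)
  -- pointwise identity
  have hdiff : ∀ (σ : Fin n → Bool) (w : E),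
      (1 / n : ℝ) * ∑ i, sgn (σ i) * ⟪w, x i⟫
      = (1 / n : ℝ) * ∑ i, sgn (σ i) * ⟪w, xmix i⟫ + (1 - l) / n * ⟪w, Z σ⟫ := by
    intro σ w
    have hx : ∀ i, ⟪w, x i⟫ = ⟪w, xmix i⟫ + (1 - l) * ⟪w, y i⟫ := by
      intro i
      have : x i = xmix i + (1 - l) • y i := by rw [hxmix i, hy]; module
      rw [this, inner_add_right, real_inner_smul_right]
    have hZw : ⟪w, Z σ⟫ = ∑ i, sgn (σ i) * ⟪w, y i⟫ := by
      rw [hZ, inner_sum]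
      exact Finset.sum_congr rfl fun i _ => real_inner_smul_right _ _ _
    simp only [hx, hZw]
    rw [Finset.mul_sum, Finset.mul_sum, Finset.mul_sum]
    rw [← Finset.sum_add_distrib]
    exact Finset.sum_congr rfl fun i _ => by ring
  -- per-sigma bound
  have step : ∀ σ : Fin n → Bool,
      (⨆ w : {w : E // ‖w‖ ≤ Λ}, (1 / n : ℝ) * ∑ i, sgn (σ i) * ⟪w.1, x i⟫)
      - (⨆ w : {w : E // ‖w‖ ≤ Λ}, (1 / n : ℝ) * ∑ i, sgn (σ i) * ⟪w.1, xmix i⟫)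
      ≤ (1 - l) / n * (Λ * ‖Z σ‖) := by
    intro σ
    rw [sub_le_iff_le_add]
    have hne : Nonempty {w : E // ‖w‖ ≤ Λ} := ⟨⟨0, by simp [le_of_lt hΛ]⟩⟩
    refine ciSup_le fun w => ?_
    have h1 : (1 / n : ℝ) * ∑ i, sgn (σ i) * ⟪w.1, xmix i⟫
        ≤ ⨆ w : {w : E // ‖w‖ ≤ Λ}, (1 / n : ℝ) * ∑ i, sgn (σ i) * ⟪w.1, xmix i⟫ :=
      le_ciSup (bdd xmix σ) w
    have h2 : (1 - l) / n * ⟪w.1, Z σ⟫ ≤ (1 - l) / n * (Λ * ‖Z σ‖) := by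
      refine mul_le_mul_of_nonneg_left ?_ (by positivity)
      calc ⟪w.1, Z σ⟫ ≤ ‖w.1‖ * ‖Z σ‖ := real_inner_le_norm _ _
        _ ≤ Λ * ‖Z σ‖ := mul_le_mul_of_nonneg_right w.2 (norm_nonneg _)
    rw [hdiff σ w.1]
    linarith
  -- sum the bound
  have hpow : (0 : ℝ) < 2 ^ n := by positivity
  have total :
      ((2 ^ n : ℝ)⁻¹ * ∑ σ : Fin n → Bool,
          ⨆ w : {w : E // ‖w‖ ≤ Λ}, (1 / n : ℝ) * ∑ i, sgn (σ i) * ⟪w.1, x i⟫)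
        - ((2 ^ n : ℝ)⁻¹ * ∑ σ : Fin n → Bool,
          ⨆ w : {w : E // ‖w‖ ≤ Λ}, (1 / n : ℝ) * ∑ i, sgn (σ i) * ⟪w.1, xmix i⟫)
      ≤ (1 - l) / n * Λ * ((2 ^ n : ℝ)⁻¹ * ∑ σ : Fin n → Bool, ‖Z σ‖) := by
    rw [← mul_sub, ← Finset.sum_sub_distrib]
    have := Finset.sum_le_sum (fun σ (_ : σ ∈ Finset.univ) => step σ)
    calc (2 ^ n : ℝ)⁻¹ * ∑ σ : Fin n → Bool,
          ((⨆ w : {w : E // ‖w‖ ≤ Λ}, (1 / n : ℝ) * ∑ i, sgn (σ i) * ⟪w.1, x i⟫)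
          - ⨆ w : {w : E // ‖w‖ ≤ Λ}, (1 / n : ℝ) * ∑ i, sgn (σ i) * ⟪w.1, xmix i⟫)
        ≤ (2 ^ n : ℝ)⁻¹ * ∑ σ : Fin n → Bool, (1 - l) / n * (Λ * ‖Z σ‖) :=
          mul_le_mul_of_nonneg_left this (by positivity)
      _ = (1 - l) / n * Λ * ((2 ^ n : ℝ)⁻¹ * ∑ σ : Fin n → Bool, ‖Z σ‖) := by
          simp only [Finset.mul_sum]
          exact Finset.sum_congr rfl fun σ _ => by ring
  -- Cauchy-Schwarz on sum of norms
  have hQ : ∑ σ : Fin n → Bool, ‖Z σ‖ ^ 2 = 2 ^ n * ∑ i, ‖y i‖ ^ 2 := by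
    exact Zsq n y
  have hcard : (Finset.univ : Finset (Fin n → Bool)).card = 2 ^ n := by
    simp [Finset.card_univ]
  have hCS : (∑ σ : Fin n → Bool, ‖Z σ‖) ^ 2 ≤ 2 ^ n * (2 ^ n * ∑ i, ‖y i‖ ^ 2) := by
    have h := sq_sum_le_card_mul_sum_sq (s := (Finset.univ : Finset (Fin n → Bool)))
      (f := fun σ => ‖Z σ‖)
    rw [hcard] at h
    push_cast at h
    rw [← hQ]
    exact h
  have havg : (2 ^ n : ℝ)⁻¹ * ∑ σ : Fin n → Bool, ‖Z σ‖ ≤ Real.sqrt (∑ i, ‖y i‖ ^ 2) := by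
    have h1 : 0 ≤ ∑ σ : Fin n → Bool, ‖Z σ‖ := Finset.sum_nonneg fun _ _ => norm_nonneg _
    have h2 : ∑ σ : Fin n → Bool, ‖Z σ‖ ≤ 2 ^ n * Real.sqrt (∑ i, ‖y i‖ ^ 2) := by
      have hA : (0:ℝ) ≤ ∑ i, ‖y i‖ ^ 2 := Finset.sum_nonneg fun _ _ => by positivity
      have hs2 : Real.sqrt (∑ i, ‖y i‖ ^ 2) ^ 2 = ∑ i, ‖y i‖ ^ 2 := Real.sq_sqrt hA
      have hsn : 0 ≤ Real.sqrt (∑ i, ‖y i‖ ^ 2) := Real.sqrt_nonneg _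
      have e : (2:ℝ) ^ n * (2 ^ n * ∑ i, ‖y i‖ ^ 2)
          = (2 ^ n * Real.sqrt (∑ i, ‖y i‖ ^ 2)) ^ 2 := by
        rw [mul_pow, hs2]; ring
      rw [e] at hCS
      exact (abs_le_of_sq_le_sq' hCS (by positivity)).2
    calc (2 ^ n : ℝ)⁻¹ * ∑ σ : Fin n → Bool, ‖Z σ‖
        ≤ (2 ^ n : ℝ)⁻¹ * (2 ^ n * Real.sqrt (∑ i, ‖y i‖ ^ 2)) :=
          mul_le_mul_of_nonneg_left h2 (by positivity)
      _ = Real.sqrt (∑ i, ‖y i‖ ^ 2) := by field_simp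
  -- final combination
  have hfinal : (1 - l) / n * Λ * Real.sqrt (∑ i, ‖y i‖ ^ 2)
      = (Λ * (1 - l) / Real.sqrt n) * Real.sqrt V := by
    have hyV : ∑ i, ‖y i‖ ^ 2 = (n : ℝ) * V := by rw [hVeq]; field_simp
    have hrn : Real.sqrt n * Real.sqrt n = n := Real.mul_self_sqrt (le_of_lt hN)
    have hrnne : Real.sqrt n ≠ 0 := by positivity
    have key2 : (1 - l) / (n:ℝ) * Λ * Real.sqrt n = Λ * (1 - l) / Real.sqrt n := by
      field_simp
      linear_combination (1 - l) * hrn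
    rw [hyV, Real.sqrt_mul (le_of_lt hN), ← mul_assoc, key2]
  calc _ ≤ (1 - l) / n * Λ * ((2 ^ n : ℝ)⁻¹ * ∑ σ : Fin n → Bool, ‖Z σ‖) := total
    _ ≤ (1 - l) / n * Λ * Real.sqrt (∑ i, ‖y i‖ ^ 2) :=
        mul_le_mul_of_nonneg_left havg (by positivity)
    _ = (Λ * (1 - l) / Real.sqrt n) * Real.sqrt V := hfinal
end

section
/- Let μ, ε_1,…,ε_n be vectors in a real inner product space with n ≥ 1, set x_i = μ + ε_i, let x̄ = (1/n) Σ_{j=1}^n x_j be the sample mean, and assume ‖x̄‖ = ‖μ‖. Let λ ∈ [0,1], L ∈ ℕ, W > 0, and set C = 2^{L + 1/2} W / √n. Then 0 ≤ C · max_{1≤i≤n} ‖x_i‖ − C · max_{1≤i≤n} ( λ ‖x_i‖ + (1−λ) ‖x̄‖ ) ≤ ( (1−λ) / √n ) · 2^{L+1/2} W · max_{1≤i≤n} ‖ε_i‖. In particular, the difference between the maxima of the norm-based Rademacher complexity bounds for the neural network class before and after mixup is nonnegative and at most a constant multiple of the maximum noise norm. -/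
/-- Complexity reduction of neural networks with mixup (arithmetic core): modeling each sample
point as population mean plus noise, `xᵢ = μ + εᵢ`, with the sample mean `x̄` having the same
norm as `μ`, the difference between the maxima of the norm-based Rademacher complexity bounds
`C maxᵢ ‖xᵢ‖` (original) and `C maxᵢ (λ‖xᵢ‖ + (1-λ)‖x̄‖)` (mixup), where
`C = 2^{L+1/2} W / √n`, is nonnegative and at most
`((1-λ)/√n) 2^{L+1/2} W maxᵢ ‖εᵢ‖`. -/
theorem rademacher_reduction_nn_mixup {E : Type*} [NormedAddCommGroup E]
    [InnerProductSpace ℝ E] (n : ℕ) (hn : 0 < n)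
    (μ : E) (ε : Fin n → E) (x : Fin n → E) (hx : ∀ i, x i = μ + ε i)
    (xbar : E) (hxbar : xbar = (1 / n : ℝ) • ∑ j, x j)
    (hmean : ‖xbar‖ = ‖μ‖)
    (l : ℝ) (hl : l ∈ Set.Icc (0 : ℝ) 1)
    (L : ℕ) (W : ℝ) (hW : 0 < W)
    (C : ℝ) (hC : C = 2 ^ ((L : ℝ) + 1 / 2) * W / Real.sqrt n) :
    0 ≤ C * (Finset.univ.sup' ⟨⟨0, hn⟩, Finset.mem_univ _⟩ fun i => ‖x i‖)
        - C * (Finset.univ.sup' ⟨⟨0, hn⟩, Finset.mem_univ _⟩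
            fun i => l * ‖x i‖ + (1 - l) * ‖xbar‖)
    ∧ C * (Finset.univ.sup' ⟨⟨0, hn⟩, Finset.mem_univ _⟩ fun i => ‖x i‖)
        - C * (Finset.univ.sup' ⟨⟨0, hn⟩, Finset.mem_univ _⟩
            fun i => l * ‖x i‖ + (1 - l) * ‖xbar‖)
      ≤ ((1 - l) / Real.sqrt n) * 2 ^ ((L : ℝ) + 1 / 2) * W
          * (Finset.univ.sup' ⟨⟨0, hn⟩, Finset.mem_univ _⟩ fun i => ‖ε i‖) := by
  obtain ⟨hl0, hl1⟩ := hl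
  have ne : (Finset.univ : Finset (Fin n)).Nonempty := ⟨⟨0, hn⟩, Finset.mem_univ _⟩
  set M := Finset.univ.sup' (⟨⟨0, hn⟩, Finset.mem_univ _⟩ :
      (Finset.univ : Finset (Fin n)).Nonempty) (fun i => ‖x i‖) with hM
  set S := Finset.univ.sup' (⟨⟨0, hn⟩, Finset.mem_univ _⟩ :
      (Finset.univ : Finset (Fin n)).Nonempty)
      (fun i => l * ‖x i‖ + (1 - l) * ‖xbar‖) with hS
  set Mε := Finset.univ.sup' (⟨⟨0, hn⟩, Finset.mem_univ _⟩ :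
      (Finset.univ : Finset (Fin n)).Nonempty) (fun i => ‖ε i‖) with hMε
  have hC0 : 0 ≤ C := by
    rw [hC]; positivity
  have hxM : ∀ i, ‖x i‖ ≤ M := fun i => by
    rw [hM]; exact Finset.le_sup' (fun i => ‖x i‖) (Finset.mem_univ i)
  have hxbarM : ‖xbar‖ ≤ M := by
    rw [hxbar]
    have h1 : ‖(1 / n : ℝ) • ∑ j, x j‖ ≤ (1 / n : ℝ) * ∑ j, ‖x j‖ := by
      rw [norm_smul]
      gcongr
      · simp
      · exact norm_sum_le _ _
    have h2 : ∑ j, ‖x j‖ ≤ ∑ _j : Fin n, M := by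
      exact Finset.sum_le_sum fun j _ => hxM j
    have h3 : (1 / n : ℝ) * ∑ _j : Fin n, M = M := by
      rw [Finset.sum_const]
      simp only [Finset.card_univ, Fintype.card_fin, nsmul_eq_mul]
      field_simp
    have hn' : (0 : ℝ) < 1 / n := by positivity
    nlinarith [mul_le_mul_of_nonneg_left h2 hn'.le]
  have hSM : S ≤ M := by
    rw [hS]
    apply Finset.sup'_le
    intro i _
    nlinarith [hxM i]
  have key : M - S ≤ (1 - l) * Mε := by
    obtain ⟨i₀, -, hi₀⟩ := Finset.exists_mem_eq_sup'
      (⟨⟨0, hn⟩, Finset.mem_univ _⟩ : (Finset.univ : Finset (Fin n)).Nonempty)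
      (fun i => ‖x i‖)
    have hSge : l * ‖x i₀‖ + (1 - l) * ‖xbar‖ ≤ S := by
      rw [hS]; exact Finset.le_sup' (fun i => l * ‖x i‖ + (1 - l) * ‖xbar‖) (Finset.mem_univ i₀)
    have hnoise : ‖x i₀‖ - ‖μ‖ ≤ ‖ε i₀‖ := by
      rw [hx i₀]
      have := norm_add_le μ (ε i₀)
      linarith
    have hεM : ‖ε i₀‖ ≤ Mε := by
      rw [hMε]; exact Finset.le_sup' (fun i => ‖ε i‖) (Finset.mem_univ i₀)
    rw [hM, hi₀]
    rw [hmean] at hSge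
    nlinarith
  have hMεC : C * ((1 - l) * Mε)
      = ((1 - l) / Real.sqrt n) * 2 ^ ((L : ℝ) + 1 / 2) * W * Mε := by
    rw [hC]; ring
  constructor
  · nlinarith [mul_le_mul_of_nonneg_left hSM hC0]
  · calc C * M - C * S = C * (M - S) := by ring
      _ ≤ C * ((1 - l) * Mε) := mul_le_mul_of_nonneg_left key hC0
      _ = _ := hMεC
end
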